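/- arXiv:2409.01261 — 2 statements merged into one kernel-verified Lean document; each statement's English description precedes it below -/
import Mathlib

section
/- For the Dyck shift on 2M symbols (M ≥ 2), the number of periodic points of period n whose first n symbols contain equally many opening and closing brackets is binom(n, n/2)·M^{n/2} when n is even, and 0 when n is odd. -/
/-- The alphabet of `M` bracket pairs: `Sum.inl k` is the opening bracket `α_k`,
`Sum.inr k` is the closing bracket `β_k`. -/
abbrev DyckSym (M : ℕ) := Fin M ⊕ Fin M

/-- One step of left-to-right reduction in the Dyck monoid with zero:
the accumulator is `none` (the zero element) or the reduced word so far. -/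
def dyckRedStep (M : ℕ) : Option (List (DyckSym M)) → DyckSym M → Option (List (DyckSym M))
  | none, _ => none
  | some l, Sum.inl k => some (l ++ [Sum.inl k])
  | some l, Sum.inr k =>
      match l.getLast? with
      | some (Sum.inl j) => if j = k then some l.dropLast else none
      | _ => some (l ++ [Sum.inr k])

/-- Reduction of a finite word in the Dyck monoid with zero; `none` represents `0`. -/
def dyckRed (M : ℕ) (w : List (DyckSym M)) : Option (List (DyckSym M)) :=
  w.foldl (dyckRedStep M) (some [])

/-- The finite subword `ω_j ⋯ ω_k` of a bi-infinite sequence. -/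
def dyckSubword (M : ℕ) (ω : ℤ → DyckSym M) (j k : ℤ) : List (DyckSym M) :=
  (List.range (k - j + 1).toNat).map fun i => ω (j + i)

/-- The Dyck shift on `2M` symbols. -/
def dyckShiftSet (M : ℕ) : Set (ℤ → DyckSym M) :=
  {ω | ∀ j k : ℤ, j < k → dyckRed M (dyckSubword M ω j k) ≠ none}

/-- The left shift map. -/
def dyckShiftMap (M : ℕ) (ω : ℤ → DyckSym M) : ℤ → DyckSym M := fun i => ω (i + 1)

/-- `H_n(ω)`: excess of opening over closing brackets among `ω_0 ⋯ ω_{n-1}`. -/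
def dyckH (M : ℕ) (n : ℕ) (ω : ℤ → DyckSym M) : ℤ :=
  ∑ j ∈ Finset.range n, (if (ω (j : ℤ)).isLeft then (1 : ℤ) else -1)

/-- Periodic points of period `n` of the Dyck shift. -/
def dyckPer (M n : ℕ) : Set (ℤ → DyckSym M) :=
  {ω | ω ∈ dyckShiftSet M ∧ (dyckShiftMap M)^[n] ω = ω}

/-- Period-`n` points with `H_n = 0`. -/
def dyckPer0 (M n : ℕ) : Set (ℤ → DyckSym M) :=
  {ω | ω ∈ dyckPer M n ∧ dyckH M n ω = 0}


/-!
Reading opening brackets as up-steps and closing brackets as down-steps turns a point `ω` into a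
lattice path. A closing bracket at `p` is matched with the last time `q < p` at which the path
sits at the level it reaches after `p`; reducing a finite subword in the Dyck monoid cancels
exactly such matched pairs, so `ω` lies in the Dyck shift iff every matched pair carries a single
colour. For a period-`n` point, `H_n = 0` makes the path `n`-periodic, so every closing bracket
is matched, and matching commutes with translation by `n`. A point of `Per_{0,n}` is therefore a
balanced bracket pattern on `ℤ/n` (`binom(n, n/2)` choices, none if `n` is odd) together with
free colours on its `n/2` opening brackets, the closing brackets copying the colour of their
mates.
-/

namespace DyckShift

open Finset Function

def bracketSign (x : Bool) : ℤ := if x then 1 else -1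

/-- The level at time `t` of the walk with steps `bracketSign (b i)` that is at level `0` at
time `0`; the second sum handles `t < 0`. -/
noncomputable def height (b : ℤ → Bool) (t : ℤ) : ℤ :=
  ∑ i ∈ Ico 0 t, bracketSign (b i) - ∑ i ∈ Ico t 0, bracketSign (b i)

section Height

variable (b : ℤ → Bool)

theorem height_zero : height b 0 = 0 := by simp [height]

theorem height_succ (t : ℤ) : height b (t + 1) = height b t + bracketSign (b t) := by
  rcases le_or_gt 0 t with h | h
  · rw [height, height, ← Order.succ_eq_add_one, ← insert_Ico_right_eq_Ico_succ h,
      sum_insert (by simp), Ico_eq_empty_of_le (h.trans (Order.le_succ t)), Ico_eq_empty_of_le h]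
    ring
  · rw [height, height, ← insert_Ico_succ_left_eq_Ico h, sum_insert (by simp),
      Order.succ_eq_add_one, Ico_eq_empty_of_le (show t + 1 ≤ 0 by omega), Ico_eq_empty_of_le h.le]
    ring

theorem height_succ_eq_or (t : ℤ) :
    height b (t + 1) = height b t + 1 ∨ height b (t + 1) = height b t - 1 := by
  rw [height_succ, bracketSign]
  split_ifs <;> omega

variable {b}

theorem height_lt_height_succ_iff {t : ℤ} : height b t < height b (t + 1) ↔ b t = true := by
  rw [height_succ, bracketSign]
  split_ifs with h <;> simp [h]

theorem height_succ_lt_height_iff {t : ℤ} : height b (t + 1) < height b t ↔ b t = false := by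
  rw [height_succ, bracketSign]
  split_ifs with h <;> simp [h]

theorem height_natCast (n : ℕ) : height b n = ∑ j ∈ range n, bracketSign (b j) := by
  induction n with
  | zero => simp [height_zero]
  | succ n ih => rw [Nat.cast_succ, height_succ, ih, sum_range_succ]

theorem periodic_height {c : ℤ} (hb : Periodic b c) (hc : height b c = 0) :
    Periodic (height b) c := by
  intro t
  induction t using Int.induction_on with
  | zero => simp [height_zero, hc]
  | succ k ih => rw [add_right_comm, height_succ, ih, hb, height_succ]
  | pred k ih =>
    have h₁ := height_succ b (-k - 1 + c)
    have h₂ := height_succ b (-k - 1)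
    rw [hb, show -(k : ℤ) - 1 + c + 1 = -k + c by ring, ih] at h₁
    rw [show -(k : ℤ) - 1 + 1 = -k by ring] at h₂
    linarith

end Height

/-- The step at `q` is the opening bracket matched with the closing bracket at `p`: the path
leaves the level `height b q` at time `q` and first comes back to it at time `p + 1`. -/
def IsMatch (b : ℤ → Bool) (q p : ℤ) : Prop :=
  q < p ∧ height b (p + 1) = height b q ∧ ∀ i, q < i → i ≤ p → height b q < height b i

namespace IsMatch

variable {b : ℤ → Bool} {q q' p : ℤ}

theorem height_succ_left (h : IsMatch b q p) : height b (q + 1) = height b q + 1 := by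
  have := h.2.2 (q + 1) (by omega) (by have := h.1; omega)
  have := height_succ_eq_or b q
  omega

theorem height_right (h : IsMatch b q p) : height b p = height b q + 1 := by
  have := h.2.2 p h.1 le_rfl
  have := height_succ_eq_or b p
  have := h.2.1
  omega

theorem left (h : IsMatch b q p) : b q = true :=
  height_lt_height_succ_iff.1 (by rw [h.height_succ_left]; omega)

theorem right (h : IsMatch b q p) : b p = false :=
  height_succ_lt_height_iff.1 (by rw [h.height_right, h.2.1]; omega)

theorem unique (h : IsMatch b q p) (h' : IsMatch b q' p) : q = q' := by
  by_contra hne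
  rcases lt_or_gt_of_ne hne with hlt | hlt
  · have := h.2.2 q' hlt h'.1.le; have := h.2.1; have := h'.2.1; omega
  · have := h'.2.2 q hlt h.1.le; have := h.2.1; have := h'.2.1; omega

theorem add_period {c : ℤ} (hc : Periodic (height b) c) (h : IsMatch b q p) :
    IsMatch b (q + c) (p + c) := by
  refine ⟨by have := h.1; omega, by rw [add_right_comm, hc, hc, h.2.1], fun i hi hip => ?_⟩
  have := h.2.2 (i - c) (by omega) (by omega)
  rwa [hc, ← hc.sub_eq i]

end IsMatch

theorem exists_isMatch {b : ℤ → Bool} {j p : ℤ} (hp : b p = false) (hjp : j ≤ p)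
    (hj : height b j = height b (p + 1)) : ∃ q, IsMatch b q p := by
  obtain ⟨q, ⟨hjq, hqp, hq⟩, hmax⟩ := Int.exists_greatest_of_bdd
    (P := fun i => j ≤ i ∧ i ≤ p ∧ height b i ≤ height b (p + 1))
    ⟨p, fun _ hi => hi.2.1⟩ ⟨j, le_rfl, hjp, hj.le⟩
  have hgt : ∀ i, q < i → i ≤ p → height b (p + 1) < height b i := fun i hqi hip =>
    not_le.1 fun hi => absurd (hmax i ⟨by omega, hip, hi⟩) (by omega)
  have hpdown := height_succ_lt_height_iff.2 hp
  have hqp' : q < p := lt_of_le_of_ne hqp (by rintro rfl; omega)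
  have hstep := height_succ_eq_or b q
  have := hgt (q + 1) (by omega) (by omega)
  exact ⟨q, hqp', by omega, fun i hqi hip => by have := hgt i hqi hip; omega⟩

noncomputable def matchOf (b : ℤ → Bool) (p : ℤ) : ℤ :=
  Classical.epsilon fun q => IsMatch b q p

theorem isMatch_matchOf {b : ℤ → Bool} {p : ℤ} (h : ∃ q, IsMatch b q p) :
    IsMatch b (matchOf b p) p :=
  Classical.epsilon_spec h

def IsMeander (b : ℤ → Bool) (j : ℤ) (L : ℕ) : Prop :=
  ∀ i, j ≤ i → i ≤ j + L → height b j ≤ height b i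

namespace IsMeander

variable {b : ℤ → Bool} {j : ℤ} {K : ℕ}

theorem height_succ (hL : IsMeander b j (K + 1)) : height b (j + 1) = height b j + 1 := by
  have := hL (j + 1) (by omega) (by omega)
  have := height_succ_eq_or b j
  omega

theorem exists_isMatch_or_isMeander_succ (hL : IsMeander b j (K + 1)) :
    (∃ p, p < j + (K + 1 : ℕ) ∧ IsMatch b j p) ∨ IsMeander b (j + 1) K := by
  have hj1 := hL.height_succ
  by_cases hret : ∃ p, j ≤ p ∧ p < j + (K + 1 : ℕ) ∧ height b (p + 1) = height b j
  · obtain ⟨p, ⟨hjp, hpL, hp⟩, hmin⟩ := Int.exists_least_of_bdd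
      (P := fun p => j ≤ p ∧ p < j + (K + 1 : ℕ) ∧ height b (p + 1) = height b j)
      ⟨j, fun _ hz => hz.1⟩ hret
    refine .inl ⟨p, hpL, lt_of_le_of_ne hjp (by rintro rfl; omega), hp, fun i hji hip => ?_⟩
    refine lt_of_le_of_ne (hL i hji.le (by omega)) fun hi => ?_
    have := hmin (i - 1) ⟨by omega, by omega, by rw [sub_add_cancel, hi]⟩
    omega
  · push Not at hret
    refine .inr fun i hi hi' => ?_
    have := hL i (by omega) (by omega)
    have := hret (i - 1) (by omega) (by omega)
    rw [sub_add_cancel] at this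
    omega

end IsMeander

theorem exists_drop_of_not_isMeander {b : ℤ → Bool} {j : ℤ} {L : ℕ} (hL : ¬IsMeander b j L) :
    ∃ p, j ≤ p ∧ p < j + L ∧ IsMeander b j (p - j).toNat ∧ height b p = height b j ∧
      b p = false := by
  obtain ⟨q, ⟨hjq, hqL, hq⟩, hmin⟩ := Int.exists_least_of_bdd
    (P := fun q => j ≤ q ∧ q ≤ j + L ∧ height b q < height b j) ⟨j, fun _ hz => hz.1⟩
    (by simpa [IsMeander] using hL)
  have hjq' : j < q := lt_of_le_of_ne hjq (by rintro rfl; omega)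
  have hbefore : IsMeander b j (q - 1 - j).toNat := fun i hi hi' =>
    not_lt.1 fun h => absurd (hmin i ⟨hi, by omega, h⟩) (by omega)
  have hstep := height_succ_eq_or b (q - 1)
  have := hbefore (q - 1) (by omega) (by omega)
  rw [sub_add_cancel] at hstep
  exact ⟨q - 1, by omega, by omega, hbefore, by omega,
    height_succ_lt_height_iff.1 (by rw [sub_add_cancel]; omega)⟩

def window {α : Type*} (ω : ℤ → α) (j : ℤ) (L : ℕ) : List α :=
  (List.range L).map fun i : ℕ => ω (j + i)

section Window

variable {α : Type*} (ω : ℤ → α) (j : ℤ)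

theorem window_zero : window ω j 0 = [] := rfl

theorem window_succ (L : ℕ) : window ω j (L + 1) = window ω j L ++ [ω (j + L)] := by
  simp [window, List.range_succ]

theorem window_succ_left (L : ℕ) : window ω j (L + 1) = ω j :: window ω (j + 1) L := by
  simp only [window, List.range_succ_eq_map, List.map_cons, List.map_map, Nat.cast_zero, add_zero]
  congr 1
  refine List.map_congr_left fun i _ => ?_
  simp only [comp_apply, Nat.cast_succ]
  ring_nf

theorem window_add (K L : ℕ) : window ω j (K + L) = window ω j K ++ window ω (j + K) L := by
  simp only [window, List.range_add, List.map_append, List.map_map]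
  congr 1
  refine List.map_congr_left fun i _ => ?_
  simp only [comp_apply, Nat.cast_add]
  ring_nf

theorem window_eq_append {i : ℤ} {L : ℕ} (hji : j ≤ i) (hiL : i ≤ j + L) :
    window ω j L = window ω j (i - j).toNat ++ window ω i (j + L - i).toNat := by
  have := window_add ω j (i - j).toNat (j + L - i).toNat
  rwa [show (i - j).toNat + (j + L - i).toNat = L by omega,
    show j + ((i - j).toNat : ℤ) = i by omega] at this

theorem window_eq_cons_append {p : ℤ} (hjp : j < p) :
    window ω j (p - j + 1).toNat = ω j :: (window ω (j + 1) (p - j - 1).toNat ++ [ω p]) := by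
  rw [show (p - j + 1).toNat = (p - j - 1).toNat + 1 + 1 by omega, window_succ, window_succ_left,
    show j + (((p - j - 1).toNat + 1 : ℕ) : ℤ) = p by omega, List.cons_append]

end Window

variable {M : ℕ}

theorem dyckSubword_eq_window (ω : ℤ → DyckSym M) (j k : ℤ) :
    dyckSubword M ω j k = window ω j (k - j + 1).toNat := by
  simp only [dyckSubword, window, List.pure_def, List.bind_eq_flatMap, ← List.map_eq_flatMap,
    List.map_map]
  rfl

theorem foldl_dyckRedStep_none (u : List (DyckSym M)) : u.foldl (dyckRedStep M) none = none := by
  induction u with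
  | nil => rfl
  | cons x u ih => cases x <;> exact ih

theorem dyckRedStep_inl (l : List (DyckSym M)) (c : Fin M) :
    dyckRedStep M (some l) (Sum.inl c) = some (l ++ [Sum.inl c]) := rfl

theorem dyckRedStep_inr_of_inl (l : List (DyckSym M)) (c a : Fin M) :
    dyckRedStep M (some (l ++ [Sum.inl c])) (Sum.inr a) = if c = a then some l else none := by
  simp [dyckRedStep]

theorem dyckRedStep_inr_of_isRight {l : List (DyckSym M)} (hl : ∀ x ∈ l, x.isRight) (a : Fin M) :
    dyckRedStep M (some l) (Sum.inr a) = some (l ++ [Sum.inr a]) := by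
  rcases h : l.getLast? with _ | x
  · simp [dyckRedStep, h]
  · obtain ⟨d, rfl⟩ := Sum.isRight_iff.1 (hl x (List.mem_of_getLast? h))
    simp [dyckRedStep, h]

variable {ω : ℤ → DyckSym M}

theorem foldl_window_eq_none_or_of_isMeander (l : List (DyckSym M)) (j : ℤ) (L : ℕ)
    (hL : IsMeander (Sum.isLeft ∘ ω) j L) :
    (window ω j L).foldl (dyckRedStep M) (some l) = none ∨
      ∃ r : List (Fin M),
        (r.length : ℤ) = height (Sum.isLeft ∘ ω) (j + L) - height (Sum.isLeft ∘ ω) j ∧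
        (window ω j L).foldl (dyckRedStep M) (some l) = some (l ++ r.map Sum.inl) := by
  induction L with
  | zero => exact .inr ⟨[], by simp, by simp [window_zero]⟩
  | succ L ih =>
    have hstep := height_succ (Sum.isLeft ∘ ω) (j + L)
    have hpos := hL (j + L + 1) (by omega) (by push_cast; omega)
    push_cast
    rw [← add_assoc, window_succ, List.foldl_append]
    rcases ih fun i hi hi' => hL i hi (by push_cast at hi' ⊢; omega) with h0 | ⟨r, hr, hfold⟩
    · exact .inl (by rw [h0]; exact foldl_dyckRedStep_none _)
    rw [hfold]
    rcases hω : ω (j + L) with c | a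
    · refine .inr ⟨r ++ [c], ?_, by simp [dyckRedStep]⟩
      simp only [hω, comp_apply, Sum.isLeft_inl, bracketSign, if_true] at hstep
      simp only [List.length_append, List.length_singleton, Nat.cast_add, Nat.cast_one]
      omega
    · simp only [hω, comp_apply, Sum.isLeft_inr, bracketSign, Bool.false_eq_true, if_false]
        at hstep
      obtain rfl | ⟨r, c, rfl⟩ := List.eq_nil_or_concat' r
      · simp only [List.length_nil, Nat.cast_zero] at hr; omega
      simp only [List.foldl_cons, List.foldl_nil, List.map_append, List.map_singleton,
        ← List.append_assoc, dyckRedStep_inr_of_inl]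
      split_ifs
      · refine .inr ⟨r, ?_, rfl⟩
        simp only [List.length_append, List.length_singleton, Nat.cast_add, Nat.cast_one] at hr
        omega
      · exact .inl rfl

def ColorsMatch (ω : ℤ → DyckSym M) : Prop :=
  ∀ q p (a : Fin M), IsMatch (Sum.isLeft ∘ ω) q p → ω p = Sum.inr a → ω q = Sum.inl a

theorem ColorsMatch.of_mem_dyckShiftSet (hω : ω ∈ dyckShiftSet M) : ColorsMatch ω := by
  intro q p a hm hp
  obtain ⟨c, hc⟩ := Sum.isLeft_iff.1 hm.left
  have hne := hω q p hm.1
  rw [dyckRed, dyckSubword_eq_window, window_eq_cons_append ω q hm.1, List.foldl_cons, hc,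
    dyckRedStep_inl, List.nil_append, List.foldl_append] at hne
  have hinner : IsMeander (Sum.isLeft ∘ ω) (q + 1) (p - q - 1).toNat := fun i hi hi' => by
    have := hm.1; have := hm.2.2 i (by omega) (by omega); have := hm.height_succ_left; omega
  rcases foldl_window_eq_none_or_of_isMeander [Sum.inl c] _ _ hinner with h0 | ⟨r, hr, hfold⟩
  · rw [h0] at hne; exact absurd (foldl_dyckRedStep_none _) hne
  obtain rfl : r = [] := List.eq_nil_of_length_eq_zero (by
    rw [show q + 1 + ((p - q - 1).toNat : ℤ) = p by have := hm.1; omega] at hr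
    have := hm.height_succ_left; have := hm.height_right; omega)
  have hpop := dyckRedStep_inr_of_inl [] c a
  rw [List.nil_append] at hpop
  rw [hfold, List.map_nil, List.append_nil, List.foldl_cons, List.foldl_nil, hp, hpop] at hne
  rw [hc, show c = a by by_contra h; simp [h] at hne]

theorem ColorsMatch.foldl_window_of_isMatch (hω : ColorsMatch ω) {q p : ℤ}
    (hm : IsMatch (Sum.isLeft ∘ ω) q p) {l : List (DyckSym M)}
    (hinner : (window ω (q + 1) (p - q - 1).toNat).foldl (dyckRedStep M) (some (l ++ [ω q])) =
      some (l ++ [ω q])) :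
    (window ω q (p - q + 1).toNat).foldl (dyckRedStep M) (some l) = some l := by
  obtain ⟨c, hc⟩ := Sum.isLeft_iff.1 hm.left
  obtain ⟨a, ha⟩ := Sum.isRight_iff.1 (Sum.not_isLeft.1 (by simpa using hm.right))
  rw [hc] at hinner
  rw [window_eq_cons_append ω q hm.1, List.foldl_cons, List.foldl_append, hc, dyckRedStep_inl,
    hinner, ha, List.foldl_cons, List.foldl_nil, dyckRedStep_inr_of_inl,
    if_pos (Sum.inl_injective (hc.symm.trans (hω q p a hm ha)))]

theorem ColorsMatch.foldl_window_of_isMeander (hω : ColorsMatch ω) (L : ℕ) :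
    ∀ (j : ℤ) (l : List (DyckSym M)), IsMeander (Sum.isLeft ∘ ω) j L →
      ∃ r : List (Fin M),
        (r.length : ℤ) = height (Sum.isLeft ∘ ω) (j + L) - height (Sum.isLeft ∘ ω) j ∧
        (window ω j L).foldl (dyckRedStep M) (some l) = some (l ++ r.map Sum.inl) := by
  induction L using Nat.strong_induction_on with
  | _ L ih =>
  intro j l hL
  set b := Sum.isLeft ∘ ω
  rcases L with _ | K
  · exact ⟨[], by simp, by simp [window_zero]⟩
  rcases hL.exists_isMatch_or_isMeander_succ with ⟨p, hpL, hmatch⟩ | hstays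
  · have hjp := hmatch.1
    have hj1 := hmatch.height_succ_left
    obtain ⟨r, hr, hinner⟩ := ih (p - j - 1).toNat (by omega) (j + 1) (l ++ [ω j])
      fun i hi hi' => by have := hmatch.2.2 i (by omega) (by omega); omega
    obtain rfl : r = [] := List.eq_nil_of_length_eq_zero (by
      rw [show j + 1 + ((p - j - 1).toNat : ℤ) = p by omega, hmatch.height_right] at hr; omega)
    obtain ⟨r', hr', hrest⟩ := ih (j + (K + 1 : ℕ) - (p + 1)).toNat (by omega) (p + 1) l
      fun i hi hi' => by rw [hmatch.2.1]; exact hL i (by omega) (by omega)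
    refine ⟨r', by rw [hr', hmatch.2.1, show p + 1 + ((j + (K + 1 : ℕ) - (p + 1)).toNat : ℤ) =
      j + (K + 1 : ℕ) by omega], ?_⟩
    rw [window_eq_append ω j (show j ≤ p + 1 by omega) (by omega), List.foldl_append,
      show p + 1 - j = p - j + 1 by ring, hω.foldl_window_of_isMatch hmatch (by simpa using hinner),
      hrest]
  · obtain ⟨c, hc⟩ : ∃ c, ω j = Sum.inl c :=
      Sum.isLeft_iff.1 (height_lt_height_succ_iff (b := b) |>.1 (by rw [hL.height_succ]; omega))
    obtain ⟨r, hr, hfold⟩ := ih K (by omega) (j + 1) (l ++ [Sum.inl c]) hstays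
    refine ⟨c :: r, ?_, ?_⟩
    · have := hL.height_succ
      rw [List.length_cons, show j + ((K + 1 : ℕ) : ℤ) = j + 1 + K by push_cast; ring]
      push_cast
      omega
    · rw [window_succ_left, List.foldl_cons, hc, dyckRedStep_inl, hfold]
      simp

theorem ColorsMatch.foldl_window_ne_none (hω : ColorsMatch ω) (L : ℕ) :
    ∀ (j : ℤ) (l : List (DyckSym M)), (∀ x ∈ l, x.isRight) →
      (window ω j L).foldl (dyckRedStep M) (some l) ≠ none := by
  induction L using Nat.strong_induction_on with
  | _ L ih =>
  intro j l hl
  set b := Sum.isLeft ∘ ω with hb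
  by_cases hL : IsMeander b j L
  · obtain ⟨r, -, h⟩ := hω.foldl_window_of_isMeander L j l hL
    simp [h]
  -- The closing bracket at which the path first drops below its starting level has no match
  -- in the window, so it lands on a stack of closing brackets.
  obtain ⟨p, hjp, hpL, hbefore, hp, hclose⟩ := exists_drop_of_not_isMeander hL
  obtain ⟨a, ha⟩ : ∃ a, ω p = Sum.inr a :=
    Sum.isRight_iff.1 (Sum.not_isLeft.1 (by simpa [hb] using hclose))
  obtain ⟨r, hr, hfold⟩ := hω.foldl_window_of_isMeander _ j l hbefore
  obtain rfl : r = [] := List.eq_nil_of_length_eq_zero (by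
    rw [← hb, show j + ((p - j).toNat : ℤ) = p by omega] at hr; omega)
  rw [window_eq_append ω j hjp hpL.le, show (j + L - p).toNat = (j + L - (p + 1)).toNat + 1 by omega,
    window_succ_left, List.foldl_append, List.foldl_cons, hfold, List.map_nil, List.append_nil, ha,
    dyckRedStep_inr_of_isRight hl]
  refine ih _ (by omega) (p + 1) _ fun x hx => ?_
  rcases List.mem_append.1 hx with hx | hx
  · exact hl x hx
  · simp [List.mem_singleton.1 hx]

theorem mem_dyckShiftSet_iff : ω ∈ dyckShiftSet M ↔ ColorsMatch ω :=
  ⟨ColorsMatch.of_mem_dyckShiftSet, fun hω j k _ => by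
    rw [dyckRed, dyckSubword_eq_window]
    exact hω.foldl_window_ne_none _ j [] (by simp)⟩

theorem dyckShiftMap_iterate (n : ℕ) (ω : ℤ → DyckSym M) :
    (dyckShiftMap M)^[n] ω = fun t => ω (t + n) := by
  induction n with
  | zero => simp
  | succ n ih =>
    rw [iterate_succ_apply', ih]
    funext t
    simp only [dyckShiftMap, Nat.cast_succ, add_assoc, add_comm (1 : ℤ)]

theorem dyckShiftMap_iterate_eq_self_iff {n : ℕ} :
    (dyckShiftMap M)^[n] ω = ω ↔ Periodic ω n := by
  rw [dyckShiftMap_iterate, funext_iff]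
  rfl

theorem dyckH_eq_height (n : ℕ) (ω : ℤ → DyckSym M) :
    dyckH M n ω = height (Sum.isLeft ∘ ω) n := by
  rw [height_natCast]
  rfl

theorem periodic_comp_intCast {n : ℕ} {α : Type*} (w : ZMod n → α) : Periodic (w ∘ Int.cast) n :=
  fun t => by simp

section ZMod

variable {n : ℕ} [NeZero n]

theorem sum_range_eq_sum_zmod {β : Type*} [AddCommMonoid β] (f : ZMod n → β) :
    ∑ j ∈ range n, f j = ∑ x, f x :=
  sum_bij' (fun j _ => (j : ZMod n)) (fun x _ => x.val) (by simp) (by simp [ZMod.val_lt])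
    (fun j hj => by simp [ZMod.val_natCast, Nat.mod_eq_of_lt (mem_range.1 hj)]) (by simp) (by simp)

theorem periodic_iff_exists_comp_intCast {α : Type*} {ω : ℤ → α} :
    Periodic ω n ↔ ∃ w : ZMod n → α, w ∘ Int.cast = ω := by
  refine ⟨fun h => ⟨fun x => ω x.val, funext fun t => ?_⟩,
    fun ⟨w, hw⟩ => hw ▸ periodic_comp_intCast w⟩
  simp only [comp_apply, ZMod.val_intCast, Int.emod_def, sub_eq_add_neg, ← neg_mul,
    mul_comm (n : ℤ)]
  exact (h.int_mul _) t

theorem height_comp_intCast (s : ZMod n → Bool) :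
    height (s ∘ Int.cast) n = 2 * #{x | s x = true} - n := by
  rw [height_natCast]
  simp only [comp_apply, Int.cast_natCast]
  rw [sum_range_eq_sum_zmod (fun x => bracketSign (s x))]
  simp only [bracketSign, sum_ite, sum_const, nsmul_eq_mul, mul_one, mul_neg]
  have := card_filter_add_card_filter_not (s := univ) fun x : ZMod n => s x = true
  rw [card_univ, ZMod.card] at this
  push_cast [← this]
  ring

variable (s : ZMod n → Bool)

/-- The residue of the opening bracket matched with a closing bracket at `x` in the periodic
pattern `s` (junk unless `s x = false` and `s` is balanced). -/
noncomputable def mate (x : ZMod n) : ZMod n :=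
  (matchOf (s ∘ Int.cast) x.val : ℤ)

variable {s} (hs : height (s ∘ Int.cast) n = 0)
include hs

theorem exists_isMatch_of_balanced {p : ℤ} (hp : s p = false) :
    ∃ q, IsMatch (s ∘ Int.cast) q p :=
  exists_isMatch hp (j := p + 1 - n) (by have := NeZero.pos n; omega)
    (by rw [← (periodic_height (periodic_comp_intCast s) hs).sub_eq (p + 1)])

theorem isMatch_mate {x : ZMod n} (hx : s x = false) :
    IsMatch (s ∘ Int.cast) (matchOf (s ∘ Int.cast) x.val) x.val :=
  isMatch_matchOf (exists_isMatch_of_balanced hs (by simpa using hx))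

theorem mate_eq_of_isMatch {q p : ℤ} (h : IsMatch (s ∘ Int.cast) q p) : mate s p = q := by
  have hshift := h.add_period ((periodic_height (periodic_comp_intCast s) hs).int_mul (-(p / n)))
  have hval : p + -(p / n) * n = ((p : ZMod n).val : ℤ) := by
    rw [ZMod.val_intCast, Int.emod_def]; ring
  rw [Int.cast_id, hval] at hshift
  have hp : s p = false := by simpa using h.right
  rw [mate, (isMatch_mate hs hp).unique hshift]
  simp

theorem mate_eq_true {x : ZMod n} (hx : s x = false) : s (mate s x) = true := by
  simpa [mate] using (isMatch_mate hs hx).left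

end ZMod

def colorsOfLeftEquiv {ι α : Type*} (s : ι → Bool) (f : ι → ι)
    (hf : ∀ x, s x = false → s (f x) = true) :
    {w : ι → α ⊕ α // Sum.isLeft ∘ w = s ∧ ∀ x a, w x = Sum.inr a → w (f x) = Sum.inl a} ≃
      ({x // s x = true} → α) where
  toFun w x := Sum.elim id id (w.1 x.1)
  invFun g := ⟨fun x => if h : s x = true then Sum.inl (g ⟨x, h⟩)
      else Sum.inr (g ⟨f x, hf x (by simpa using h)⟩), by
    refine ⟨funext fun x => by by_cases h : s x = true <;> simp [h], fun x a hx => ?_⟩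
    by_cases h : s x = true
    · simp [h] at hx
    · simp only [h, Bool.false_eq_true, dite_false, Sum.inr.injEq] at hx
      simp [hf x (by simpa using h), hx]⟩
  left_inv := by
    rintro ⟨w, hshape, hcol⟩
    ext1; funext x
    have hx := congrFun hshape x
    by_cases h : s x = true
    · obtain ⟨c, hc⟩ := Sum.isLeft_iff.1 (by simpa [h] using hx)
      simp [h, hc]
    · obtain ⟨a, ha⟩ := Sum.isRight_iff.1 (Sum.not_isLeft.1 (by simpa [h] using hx))
      simp [h, ha, hcol x a ha]
  right_inv g := funext fun ⟨x, h⟩ => by simp [h]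

theorem card_colorings {ι α : Type*} [Fintype ι] [DecidableEq ι] [Fintype α] [DecidableEq α]
    (s : ι → Bool) (f : ι → ι) (hf : ∀ x, s x = false → s (f x) = true) :
    #{w : ι → α ⊕ α | Sum.isLeft ∘ w = s ∧ ∀ x a, w x = Sum.inr a → w (f x) = Sum.inl a} =
      Fintype.card α ^ #{x | s x = true} := by
  rw [← Fintype.card_subtype, Fintype.card_congr (colorsOfLeftEquiv s f hf), Fintype.card_fun,
    Fintype.card_subtype]

section Counting

variable {n : ℕ} [NeZero n]

theorem height_comp_intCast_eq_zero_iff (w : ZMod n → DyckSym M) :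
    height (Sum.isLeft ∘ w ∘ Int.cast) n = 0 ↔ 2 * #{x | (w x).isLeft} = n := by
  rw [← comp_assoc, height_comp_intCast]
  simp only [comp_apply]
  omega

theorem comp_intCast_mem_dyckShiftSet_iff {w : ZMod n → DyckSym M}
    (hw : height (Sum.isLeft ∘ w ∘ Int.cast) n = 0) :
    w ∘ Int.cast ∈ dyckShiftSet M ↔
      ∀ x a, w x = Sum.inr a → w (mate (Sum.isLeft ∘ w) x) = Sum.inl a := by
  rw [mem_dyckShiftSet_iff]
  refine ⟨fun h x a hx => h _ _ a (isMatch_mate hw (by simp [hx])) (by simpa using hx),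
    fun h q p a hm hp => ?_⟩
  have := h p a hp
  rwa [mate_eq_of_isMatch hw hm] at this

open Classical in
noncomputable def admissibleWords (M n : ℕ) [NeZero n] : Finset (ZMod n → DyckSym M) :=
  {w | 2 * #{x | (w x).isLeft} = n ∧
    ∀ x a, w x = Sum.inr a → w (mate (Sum.isLeft ∘ w) x) = Sum.inl a}

theorem dyckPer0_eq_image :
    dyckPer0 M n = (· ∘ Int.cast) '' (admissibleWords M n : Set (ZMod n → DyckSym M)) := by
  ext ω
  simp only [dyckPer0, dyckPer, Set.mem_ofPred_eq, dyckShiftMap_iterate_eq_self_iff,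
    periodic_iff_exists_comp_intCast, Set.mem_image, admissibleWords, coe_filter, mem_univ,
    true_and]
  constructor
  · rintro ⟨⟨hmem, w, rfl⟩, hH⟩
    rw [dyckH_eq_height, height_comp_intCast_eq_zero_iff] at hH
    exact ⟨w, ⟨hH, (comp_intCast_mem_dyckShiftSet_iff
      ((height_comp_intCast_eq_zero_iff w).2 hH)).1 hmem⟩, rfl⟩
  · rintro ⟨w, ⟨hH, hcol⟩, rfl⟩
    have hH' := (height_comp_intCast_eq_zero_iff w).2 hH
    exact ⟨⟨(comp_intCast_mem_dyckShiftSet_iff hH').2 hcol, w, rfl⟩, by rwa [dyckH_eq_height]⟩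

theorem filter_isLeft_eq_iff (w : ZMod n → DyckSym M) (A : Finset (ZMod n)) :
    ({x | (w x).isLeft} : Finset (ZMod n)) = A ↔ Sum.isLeft ∘ w = fun x => decide (x ∈ A) := by
  constructor
  · rintro rfl
    funext x
    simp
  · intro h
    ext x
    have := congrFun h x
    simp only [comp_apply] at this
    simp [this]

theorem card_admissibleWords_of_shape {A : Finset (ZMod n)} (hA : 2 * #A = n) :
    #{w ∈ admissibleWords M n | ({x | (w x).isLeft} : Finset (ZMod n)) = A} = M ^ #A := by
  have hs : height ((fun x => decide (x ∈ A)) ∘ Int.cast) n = 0 := by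
    rw [height_comp_intCast]; simp; omega
  rw [show M ^ #A = Fintype.card (Fin M) ^ #{x | decide (x ∈ A) = true} by simp,
    ← card_colorings (fun x => decide (x ∈ A)) (mate _) fun _ hx => mate_eq_true hs hx]
  congr 1
  ext w
  simp only [admissibleWords, mem_filter, mem_univ, true_and, filter_isLeft_eq_iff]
  constructor
  · rintro ⟨⟨-, hcol⟩, hshape⟩
    exact ⟨hshape, hshape ▸ hcol⟩
  · rintro ⟨hshape, hcol⟩
    refine ⟨⟨?_, hshape ▸ hcol⟩, hshape⟩
    rwa [(filter_isLeft_eq_iff w A).2 hshape]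

theorem card_admissibleWords :
    #(admissibleWords M n) = if Even n then n.choose (n / 2) * M ^ (n / 2) else 0 := by
  split_ifs with hn
  · have hmaps : Set.MapsTo (fun w : ZMod n → DyckSym M => ({x | (w x).isLeft} : Finset (ZMod n)))
        (admissibleWords M n) (powersetCard (n / 2) (univ : Finset (ZMod n))) := fun w hw => by
      rw [mem_coe, admissibleWords, mem_filter] at hw
      rw [mem_coe, mem_powersetCard]
      exact ⟨subset_univ _, by dsimp only; omega⟩
    rw [card_eq_sum_card_fiberwise hmaps, sum_congr rfl fun A hA => card_admissibleWords_of_shape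
      (by rw [(mem_powersetCard.1 hA).2]; exact Nat.two_mul_div_two_of_even hn),
      sum_congr rfl fun A hA => by rw [(mem_powersetCard.1 hA).2], sum_const, card_powersetCard,
      card_univ, ZMod.card, smul_eq_mul]
  · exact card_eq_zero.2 (filter_eq_empty_iff.2 fun w _ h => hn ⟨#{x | (w x).isLeft}, by omega⟩)

end Counting

end DyckShift

theorem stmt0_general (M n : ℕ) (hn : 0 < n) :
    (dyckPer0 M n).ncard =
      if Even n then n.choose (n / 2) * M ^ (n / 2) else 0 := by
  have : NeZero n := ⟨hn.ne'⟩
  rw [DyckShift.dyckPer0_eq_image,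
    Set.ncard_image_of_injective _ ZMod.intCast_surjective.injective_comp_right,
    Set.ncard_coe_finset, DyckShift.card_admissibleWords]

theorem stmt0 (M n : ℕ) (hM : 2 ≤ M) (hn : 0 < n) :
    (dyckPer0 M n).ncard =
      if Even n then n.choose (n / 2) * M ^ (n / 2) else 0 :=
  stmt0_general M n hn
end

section
/- For the Dyck shift on 2M symbols, for each n ∈ ℕ the number of period-n periodic points ω with H_n(ω) > 0 equals (M+1)^n − Σ_{i=0}^{⌊n/2⌋} binom(n,i) M^i. -/
/-- Period-`n` points with `H_n > 0` (1-unstable / negative multiplier). -/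
def dyckPerA (M n : ℕ) : Set (ℤ → DyckSym M) :=
  {ω | ω ∈ dyckPer M n ∧ 0 < dyckH M n ω}

/-- Period-`n` points with `H_n < 0`. -/
def dyckPerB (M n : ℕ) : Set (ℤ → DyckSym M) :=
  {ω | ω ∈ dyckPer M n ∧ dyckH M n ω < 0}

/-!
Read a word with a stack machine that keeps the unmatched closing brackets and the stack of
pending opening brackets. The `n`-periodic point with period word `w` lies in the Dyck shift and
has `H_n > 0` exactly when the run of `w` survives, ends with more pending openers than unmatched
closers, and the unmatched closers, read in order, match the top of the final stack, so that the
preceding period cancels them. Such a word is determined by its shape (the positions and colours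
of its opening brackets): a matched closer takes the colour of its partner, an unmatched one the
colour of the corresponding entry on top of the final stack; and every shape with more than `n/2`
opening brackets arises. Hence the count is `∑_{p > n/2} C(n,p) M^p`.
-/

section Combinatorics

open Finset

variable {ι β : Type*} [Fintype ι] [DecidableEq ι] [Fintype β]

lemma card_filter_isSome_eq (s : Finset ι) :
    #{f : ι → Option β | ({i | (f i).isSome} : Finset ι) = s} = Fintype.card β ^ #s := by
  have hpi : ({f : ι → Option β | ({i | (f i).isSome} : Finset ι) = s} : Finset _) =
      Fintype.piFinset fun i => if i ∈ s then univ.map .some else {none} := by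
    ext f
    simp only [mem_filter, mem_univ, true_and, Fintype.mem_piFinset, Finset.ext_iff]
    refine forall_congr' fun i => ?_
    cases f i <;> split_ifs <;> simp_all
  rw [hpi, Fintype.card_piFinset]
  simp [apply_ite Finset.card, Finset.prod_ite_mem]

lemma card_filter_card_isSome (P : ℕ → Prop) [DecidablePred P] :
    #{f : ι → Option β | P #{i | (f i).isSome}} =
      ∑ m ∈ range (Fintype.card ι + 1),
        (Fintype.card ι).choose m * if P m then Fintype.card β ^ m else 0 := by
  rw [card_eq_sum_card_fiberwise (f := fun f : ι → Option β => ({i | (f i).isSome} : Finset ι))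
    (t := univ.powerset) (fun _ _ => by simp)]
  have hfiber (s : Finset ι) : #{f ∈ ({f : ι → Option β | P #{i | (f i).isSome}} : Finset _) |
      ({i | (f i).isSome} : Finset ι) = s} = if P #s then Fintype.card β ^ #s else 0 := by
    rw [filter_filter]
    split_ifs with hs
    · rw [← card_filter_isSome_eq s]
      congr 1
      exact filter_congr fun f _ => ⟨And.right, fun h => ⟨h ▸ hs, h⟩⟩
    · simp only [card_eq_zero, filter_eq_empty_iff]
      rintro f - ⟨hP, rfl⟩
      exact hs hP
  simp_rw [hfiber]
  rw [sum_powerset_apply_card (fun m => if P m then Fintype.card β ^ m else 0), card_univ]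
  rfl

lemma sum_choose_mul_pow_gt_half_add (n M : ℕ) :
    ∑ m ∈ range (n + 1), n.choose m * (if n < 2 * m then M ^ m else 0) +
      ∑ i ∈ range (n / 2 + 1), n.choose i * M ^ i = (M + 1) ^ n := by
  have hlow : range (n / 2 + 1) = {m ∈ range (n + 1) | m ≤ n / 2} := by
    ext m
    simp only [mem_range, mem_filter]
    omega
  rw [hlow, sum_filter, ← sum_add_distrib, add_pow]
  refine sum_congr rfl fun m _ => ?_
  split_ifs <;> first | omega | simp [mul_comm]

lemma List.countP_ofFn {α : Type*} {n : ℕ} (p : α → Bool) (f : Fin n → α) :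
    (List.ofFn f).countP p = #{i | p (f i)} := by
  induction n with
  | zero => simp
  | succ n ih =>
    rw [List.ofFn_succ, List.countP_cons, ih, Fin.card_filter_univ_succ]
    split_ifs <;> simp_all

lemma ncard_length_eq_countP_isSome (n : ℕ) (P : ℕ → Prop) [DecidablePred P] :
    {F : List (Option β) | F.length = n ∧ P (F.countP (·.isSome))}.ncard =
      #{f : Fin n → Option β | P #{i | (f i).isSome}} := by
  have hofFn : {F : List (Option β) | F.length = n ∧ P (F.countP (·.isSome))} =
      List.ofFn '' (({f | P #{i | (f i).isSome}} : Finset (Fin n → Option β)) :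
        Set (Fin n → Option β)) := by
    ext F
    constructor
    · rintro ⟨rfl, hP⟩
      have hcount := List.countP_ofFn (·.isSome) fun i : Fin F.length => F[(i : ℕ)]
      rw [List.ofFn_getElem] at hcount
      exact ⟨fun i => F[(i : ℕ)], by simpa [← hcount] using hP, List.ofFn_getElem⟩
    · rintro ⟨f, hf, rfl⟩
      exact ⟨List.length_ofFn, by simpa [List.countP_ofFn] using hf⟩
  rw [hofFn, Set.ncard_image_of_injective _ List.ofFn_injective, Set.ncard_coe_finset]

lemma map_range_getD_eq_take {α : Type*} (d : α) {l : List α} {t : ℕ} (ht : t ≤ l.length) :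
    (List.range t).map (l.getD · d) = l.take t :=
  List.ext_getElem (by simpa using ht) fun i h _ => by
    simp only [List.length_map, List.length_range] at h
    simp [List.getElem?_eq_getElem (show i < l.length by omega)]

end Combinatorics

namespace Dyck

variable {M : ℕ}

-- The reduced word `β_{b₁} ⋯ β_{bᵣ} α_{a₁} ⋯ α_{aₛ}` is stored as `([bᵣ, …, b₁], [aₛ, …, a₁])`:
-- unmatched closing brackets and the stack of pending opening brackets, newest first.
-- In `Option (State M)`, `none` is the zero of the Dyck monoid.
abbrev State (M : ℕ) := List (Fin M) × List (Fin M)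

def step : Option (State M) → DyckSym M → Option (State M)
  | none, _ => none
  | some (rb, ra), Sum.inl k => some (rb, k :: ra)
  | some (rb, ra), Sum.inr k =>
      match ra with
      | [] => some (k :: rb, [])
      | j :: t => if j = k then some (rb, t) else none

def run (w : List (DyckSym M)) : Option (State M) :=
  w.foldl step (some ([], []))

def State.toWord (s : State M) : List (DyckSym M) :=
  s.1.reverse.map Sum.inr ++ s.2.reverse.map Sum.inl

lemma dyckRedStep_toWord (s : State M) (x : DyckSym M) :
    dyckRedStep M (some s.toWord) x = (step (some s) x).map State.toWord := by
  obtain ⟨rb, ra⟩ := s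
  cases x with
  | inl k => simp [dyckRedStep, step, State.toWord]
  | inr k =>
    cases ra with
    | nil =>
      cases rb <;> simp [dyckRedStep, step, State.toWord, List.getLast?_eq_head?_reverse]
    | cons j t =>
      by_cases hjk : j = k <;>
        simp [dyckRedStep, step, hjk, State.toWord, List.getLast?_append,
          List.dropLast_append_of_ne_nil]

lemma foldl_step_none (v : List (DyckSym M)) : v.foldl step (none : Option (State M)) = none :=
  List.foldl_fixed' (fun _ => rfl) v

lemma foldl_dyckRedStep_toWord (w : List (DyckSym M)) (s : State M) :
    w.foldl (dyckRedStep M) (some s.toWord) = (w.foldl step (some s)).map State.toWord := by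
  induction w generalizing s with
  | nil => rfl
  | cons x w ih =>
    rw [List.foldl_cons, List.foldl_cons, dyckRedStep_toWord]
    cases h : step (some s) x with
    | none =>
      simp [List.foldl_fixed' (f := dyckRedStep M) (a := none) (fun _ => rfl), foldl_step_none]
    | some s' => exact ih s'

lemma dyckRed_eq_map_run (w : List (DyckSym M)) : dyckRed M w = (run w).map State.toWord :=
  foldl_dyckRedStep_toWord w ([], [])

lemma suffix_of_foldl_step {v : List (DyckSym M)} {b a : List (Fin M)} {s : State M}
    (h : v.foldl step (some (b, a)) = some s) : b <:+ s.1 := by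
  induction v generalizing b a with
  | nil => cases h; exact List.suffix_refl b
  | cons x v ih =>
    rw [List.foldl_cons] at h
    rcases x with k | k
    · exact ih h
    · rcases a with _ | ⟨j, t⟩
      · exact (List.suffix_cons k b).trans (ih h)
      · by_cases hjk : j = k
        · simp only [step, if_pos hjk] at h
          exact ih h
        · simp [step, hjk, foldl_step_none] at h

lemma foldl_step_eq_none_of_append {v : List (DyckSym M)} {b a : List (Fin M)}
    (h : v.foldl step (some (b, a)) = none) (c L : List (Fin M)) :
    v.foldl step (some (c, a ++ L)) = none := by
  induction v generalizing b a c L with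
  | nil => cases h
  | cons x v ih =>
    rw [List.foldl_cons] at h ⊢
    rcases x with k | k
    · exact ih h c L
    · rcases a with _ | ⟨j, t⟩
      · rcases L with _ | ⟨i, L⟩
        · simp only [step, List.append_nil] at h ⊢
          exact ih h (k :: c) []
        · by_cases hik : i = k
          · simp only [step, List.nil_append, if_pos hik]
            exact ih h c L
          · simp [step, hik, foldl_step_none]
      · by_cases hjk : j = k
        · simp only [step, List.cons_append, if_pos hjk] at h ⊢
          exact ih h c L
        · simp [step, hjk, foldl_step_none]

lemma foldl_step_append_stack {v : List (DyckSym M)} {b a X a' : List (Fin M)}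
    (h : v.foldl step (some (b, a)) = some (X ++ b, a')) (c : List (Fin M)) {L : List (Fin M)}
    (hL : X.length ≤ L.length) :
    v.foldl step (some (c, a ++ L)) =
      if X.reverse <+: L then some (c, a' ++ L.drop X.length) else none := by
  induction v generalizing b a X L with
  | nil =>
    obtain ⟨hX, rfl⟩ := Prod.mk.inj (Option.some.inj h)
    obtain rfl : X = [] := by simpa using hX.symm
    simp
  | cons x v ih =>
    rw [List.foldl_cons] at h ⊢
    rcases x with k | k
    · exact ih h hL
    · rcases a with _ | ⟨j, t⟩
      · simp only [step] at h
        obtain ⟨X', hX'⟩ := suffix_of_foldl_step h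
        obtain rfl : X = X' ++ [k] := List.append_cancel_right (by simpa using hX'.symm)
        rcases L with _ | ⟨i, L⟩
        · simp at hL
        · have ih' := ih (X := X') (L := L) (by simpa using h) (by simpa using hL)
          by_cases hik : i = k
          · subst hik
            simpa [step] using ih'
          · simp [step, hik, foldl_step_none, Ne.symm hik]
      · by_cases hjk : j = k
        · simp only [step, List.cons_append, if_pos hjk] at h ⊢
          exact ih h hL
        · simp [step, hjk, foldl_step_none] at h

lemma length_add_of_foldl_step {v : List (DyckSym M)} {b a b' a' : List (Fin M)}
    (h : v.foldl step (some (b, a)) = some (b', a')) :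
    a'.length + b.length + v.length = a.length + b'.length + 2 * v.countP (·.isLeft) := by
  induction v generalizing b a with
  | nil => obtain ⟨rfl, rfl⟩ := Prod.mk.inj (Option.some.inj h); simp
  | cons x v ih =>
    rw [List.foldl_cons] at h
    rcases x with k | k
    · have := ih h
      simp only [List.length_cons, List.countP_cons, Sum.isLeft_inl, ↓reduceIte] at this ⊢
      omega
    · rcases a with _ | ⟨j, t⟩
      · have := ih h
        simp only [List.length_cons, List.length_nil, List.countP_cons, Sum.isLeft_inr,
          Bool.false_eq_true, ↓reduceIte] at this ⊢
        omega
      · by_cases hjk : j = k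
        · simp only [step, if_pos hjk] at h
          have := ih h
          simp only [List.length_cons, List.countP_cons, Sum.isLeft_inr, Bool.false_eq_true,
            ↓reduceIte] at this ⊢
          omega
        · simp [step, hjk, foldl_step_none] at h

-- A shape has `some c` for `α_c` and `none` for a closing bracket. `shapeStack` and
-- `shapeOverflow` replay a shape: the final stack and the number of unmatched closing brackets.
def shapeStack : List (Fin M) → List (Option (Fin M)) → List (Fin M)
  | a, [] => a
  | a, some c :: F => shapeStack (c :: a) F
  | [], none :: F => shapeStack [] F
  | _ :: a, none :: F => shapeStack a F

def shapeOverflow : List (Fin M) → List (Option (Fin M)) → ℕ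
  | _, [] => 0
  | a, some c :: F => shapeOverflow (c :: a) F
  | [], none :: F => shapeOverflow [] F + 1
  | _ :: a, none :: F => shapeOverflow a F

-- Matched closing brackets take the colour of their partner, unmatched ones are read off `O`.
def build (d : Fin M) : List (Fin M) → List (Fin M) → List (Option (Fin M)) → List (DyckSym M)
  | _, _, [] => []
  | a, O, some c :: F => Sum.inl c :: build d (c :: a) O F
  | [], O, none :: F => Sum.inr (O.headD d) :: build d [] O.tail F
  | j :: a, O, none :: F => Sum.inr j :: build d a O F

lemma map_getLeft?_build (d : Fin M) (a O : List (Fin M)) (F : List (Option (Fin M))) :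
    (build d a O F).map Sum.getLeft? = F := by
  induction F generalizing a O with
  | nil => rfl
  | cons o F ih => rcases o with _ | c <;> rcases a with _ | ⟨j, a⟩ <;> simp [build, ih]

lemma foldl_step_build (d : Fin M) (a O : List (Fin M)) (F : List (Option (Fin M)))
    (rb : List (Fin M)) :
    (build d a O F).foldl step (some (rb, a)) =
      some (((List.range (shapeOverflow a F)).map (O.getD · d)).reverse ++ rb, shapeStack a F) := by
  induction F generalizing a O rb with
  | nil => simp [build, shapeOverflow, shapeStack]
  | cons o F ih =>
    rcases o with _ | c
    · rcases a with _ | ⟨j, a⟩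
      · rw [build, List.foldl_cons, step, ih, shapeOverflow, shapeStack, List.range_succ_eq_map]
        cases O <;> simp [Function.comp_def]
      · simp [build, step, ih, shapeOverflow, shapeStack]
    · simp [build, step, ih, shapeOverflow, shapeStack]

lemma eq_build_of_foldl_step (d : Fin M) {w : List (DyckSym M)} {b a c a' : List (Fin M)}
    (h : w.foldl step (some (b, a)) = some (c ++ b, a')) :
    w = build d a c.reverse (w.map Sum.getLeft?) := by
  induction w generalizing b a c with
  | nil => rfl
  | cons x w ih =>
    rw [List.foldl_cons] at h
    rcases x with k | k
    · simp [build, ← ih h]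
    · rcases a with _ | ⟨j, t⟩
      · simp only [step] at h
        obtain ⟨c', hc'⟩ := suffix_of_foldl_step h
        obtain rfl : c = c' ++ [k] := List.append_cancel_right (by simpa using hc'.symm)
        simp [build, ← ih (c := c') (by simpa using h)]
      · by_cases hjk : j = k
        · subst hjk
          simp only [step] at h
          simp [build, ← ih h]
        · simp [step, hjk, foldl_step_none] at h

lemma countP_isLeft_eq_countP_isSome (w : List (DyckSym M)) :
    w.countP (·.isLeft) = (w.map Sum.getLeft?).countP (·.isSome) := by
  rw [List.countP_map]
  congr 1
  funext x
  cases x <;> rfl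

def IsPosCycle (w : List (DyckSym M)) : Prop :=
  ∃ rb ra, run w = some (rb, ra) ∧ rb.length < ra.length ∧ rb.reverse <+: ra

lemma IsPosCycle.ne_nil {w : List (DyckSym M)} (hw : IsPosCycle w) : w ≠ [] := by
  rintro rfl
  obtain ⟨rb, ra, hrun, hlt, -⟩ := hw
  obtain ⟨rfl, rfl⟩ := Prod.mk.inj (Option.some.inj hrun.symm)
  exact lt_irrefl 0 hlt

-- The unmatched closing brackets copy the top of the final stack, so that the previous period
-- cancels them.
def canonicalWord (d : Fin M) (F : List (Option (Fin M))) : List (DyckSym M) :=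
  build d [] ((shapeStack [] F).take (shapeOverflow [] F)) F

lemma IsPosCycle.eq_canonicalWord (d : Fin M) {w : List (DyckSym M)} (hw : IsPosCycle w) :
    w = canonicalWord d (w.map Sum.getLeft?) := by
  obtain ⟨rb, ra, hrun, -, hpre⟩ := hw
  have hbuild : w = build d [] rb.reverse (w.map Sum.getLeft?) :=
    eq_build_of_foldl_step d (b := []) (by rw [List.append_nil]; exact hrun)
  have hrun' := foldl_step_build d [] rb.reverse (w.map Sum.getLeft?) []
  rw [← hbuild] at hrun'
  obtain ⟨hrb, rfl⟩ := Prod.mk.inj (Option.some.inj (hrun.symm.trans hrun'))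
  have hlen : rb.reverse.length = shapeOverflow [] (w.map Sum.getLeft?) := by
    rw [hrb]; simp
  rw [canonicalWord, ← hlen, ← List.prefix_iff_eq_take.mp hpre]
  exact hbuild

lemma isPosCycle_canonicalWord (d : Fin M) {F : List (Option (Fin M))}
    (hF : F.length < 2 * F.countP (·.isSome)) : IsPosCycle (canonicalWord d F) := by
  have hrun := foldl_step_build d [] ((shapeStack [] F).take (shapeOverflow [] F)) F []
  rw [List.append_nil] at hrun
  set S := shapeStack [] F
  set t := shapeOverflow [] F
  have hcount := length_add_of_foldl_step hrun
  rw [countP_isLeft_eq_countP_isSome, map_getLeft?_build,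
    ← List.length_map (f := Sum.getLeft?), map_getLeft?_build] at hcount
  simp only [List.length_reverse, List.length_map, List.length_range, List.length_nil] at hcount
  have htS : t < S.length := by omega
  refine ⟨_, S, hrun, by simpa using htS, ?_⟩
  rw [List.reverse_reverse, map_range_getD_eq_take d (by rw [List.length_take]; omega),
    List.take_of_length_le (by simp)]
  exact List.take_prefix t S

lemma run_ne_none_of_infix {v w : List (DyckSym M)} (hvw : v <:+: w) (hw : run w ≠ none) :
    run v ≠ none := by
  obtain ⟨u, x, rfl⟩ := hvw
  intro hv
  apply hw
  rw [run, List.foldl_append, List.foldl_append, ← run]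
  rcases hu : run u with _ | ⟨c, L⟩
  · simp [foldl_step_none]
  · have := foldl_step_eq_none_of_append (b := []) (a := []) hv c L
    rw [List.nil_append] at this
    rw [this, foldl_step_none]

lemma run_append_eq {u w : List (DyckSym M)} {c L rb ra : List (Fin M)}
    (hu : run u = some (c, L)) (hw : run w = some (rb, ra)) (hL : rb.length ≤ L.length) :
    run (u ++ w) = if rb.reverse <+: L then some (c, ra ++ L.drop rb.length) else none := by
  rw [run, List.foldl_append, ← run, hu]
  exact foldl_step_append_stack (b := []) (a := []) (by rw [List.append_nil]; exact hw) c hL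

lemma run_append_eq_of_prefix {u w : List (DyckSym M)} {rb ra junk : List (Fin M)}
    (hu : run u = some (rb, ra ++ junk)) (hw : run w = some (rb, ra)) (hpre : rb.reverse <+: ra) :
    run (u ++ w) = some (rb, ra ++ (ra ++ junk).drop rb.length) := by
  have hlen : rb.length ≤ ra.length := by simpa using hpre.length_le
  rw [run_append_eq hu hw (by rw [List.length_append]; omega), if_pos (hpre.trans (List.prefix_append ra junk))]

def segment (ω : ℤ → DyckSym M) (j : ℤ) (L : ℕ) : List (DyckSym M) :=
  (List.range L).map fun i : ℕ => ω (j + i)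

@[simp]
lemma length_segment (ω : ℤ → DyckSym M) (j : ℤ) (L : ℕ) : (segment ω j L).length = L := by
  simp [segment]

lemma dyckSubword_eq_segment (ω : ℤ → DyckSym M) (j k : ℤ) :
    dyckSubword M ω j k = segment ω j (k - j + 1).toNat := by
  simp [dyckSubword, segment, ← List.map_eq_flatMap]

lemma segment_add (ω : ℤ → DyckSym M) (j : ℤ) (L₁ L₂ : ℕ) :
    segment ω j (L₁ + L₂) = segment ω j L₁ ++ segment ω (j + L₁) L₂ := by
  simp only [segment, List.range_add, List.map_append, List.map_map]
  congr 1
  refine List.map_congr_left fun i _ => ?_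
  simp [add_assoc]

lemma segment_infix (ω : ℤ → DyckSym M) (j : ℤ) (A L B : ℕ) :
    segment ω (j + A) L <:+: segment ω j (A + L + B) := by
  rw [segment_add, segment_add]
  exact ⟨_, _, rfl⟩

lemma segment_add_mul {ω : ℤ → DyckSym M} {n : ℕ} (hper : Function.Periodic ω n) (t j : ℤ)
    (L : ℕ) : segment ω (j + t * n) L = segment ω j L := by
  refine List.map_congr_left fun i _ => ?_
  rw [add_right_comm]
  exact hper.int_mul t _

lemma iterate_dyckShiftMap (m : ℕ) (ω : ℤ → DyckSym M) :
    (dyckShiftMap M)^[m] ω = fun i => ω (i + m) := by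
  induction m generalizing ω with
  | zero => simp
  | succ m ih =>
    rw [Function.iterate_succ_apply, ih]
    funext i
    simp [dyckShiftMap, add_assoc]

lemma iterate_dyckShiftMap_eq_self_iff {n : ℕ} {ω : ℤ → DyckSym M} :
    (dyckShiftMap M)^[n] ω = ω ↔ Function.Periodic ω n := by
  rw [iterate_dyckShiftMap, funext_iff]
  rfl

lemma dyckH_eq (n : ℕ) (ω : ℤ → DyckSym M) :
    dyckH M n ω = 2 * (segment ω 0 n).countP (·.isLeft) - n := by
  induction n with
  | zero => simp [dyckH, segment]
  | succ n ih =>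
    have hlast : segment ω (0 + n) 1 = [ω n] := by simp [segment]
    rw [dyckH, Finset.sum_range_succ, ← dyckH, ih, segment_add, List.countP_append, hlast]
    rcases ω n with k | k <;>
      simp only [List.countP_singleton, Sum.isLeft_inl, Sum.isLeft_inr, Bool.false_eq_true,
        ↓reduceIte] <;>
      push_cast <;> ring

lemma run_segment_mul_ne_none {ω : ℤ → DyckSym M} {n : ℕ} (hper : Function.Periodic ω n)
    (hw : IsPosCycle (segment ω 0 n)) (m : ℕ) : run (segment ω 0 (m * n)) ≠ none := by
  obtain ⟨rb, ra, hrun, -, hpre⟩ := hw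
  suffices ∀ m : ℕ, ∃ junk, run (segment ω 0 ((m + 1) * n)) = some (rb, ra ++ junk) by
    rcases m with _ | m
    · simp [segment, run]
    · obtain ⟨junk, h⟩ := this m
      simp [h]
  intro m
  induction m with
  | zero => exact ⟨[], by simpa using hrun⟩
  | succ m ih =>
    obtain ⟨junk, h⟩ := ih
    refine ⟨(ra ++ junk).drop rb.length, ?_⟩
    rw [add_mul, one_mul, segment_add, zero_add, ← zero_add ((((m + 1) * n : ℕ) : ℤ)),
      show ((((m + 1) * n : ℕ) : ℤ)) = ((m + 1 : ℕ) : ℤ) * n by push_cast; ring,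
      segment_add_mul hper, run_append_eq_of_prefix h hrun hpre]

lemma mem_dyckShiftSet_of_isPosCycle {ω : ℤ → DyckSym M} {n : ℕ}
    (hper : Function.Periodic ω n) (hw : IsPosCycle (segment ω 0 n)) : ω ∈ dyckShiftSet M := by
  have hn : 0 < n := List.length_pos_iff.mpr hw.ne_nil |>.trans_eq (length_segment ω 0 n)
  intro j k _
  rw [Ne, dyckRed_eq_map_run, Option.map_eq_none_iff, dyckSubword_eq_segment]
  -- shift the subword by a multiple of the period to start at `A ≥ 0`; it is then an infix of a
  -- power of the period word
  set L := (k - j + 1).toNat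
  obtain ⟨A, hA⟩ : ∃ A : ℕ, j + (-j).toNat * n = A := by
    refine ⟨(j + (-j).toNat * n).toNat, (Int.toNat_of_nonneg ?_).symm⟩
    have : ((-j).toNat : ℤ) ≤ (-j).toNat * n :=
      le_mul_of_one_le_right (by positivity) (by exact_mod_cast hn)
    linarith [Int.self_le_toNat (-j)]
  rw [← segment_add_mul hper (-j).toNat, hA, ← zero_add (A : ℤ)]
  refine run_ne_none_of_infix (segment_infix ω 0 A L ((A + L) * n - (A + L))) ?_
  rw [Nat.add_sub_cancel' (Nat.le_mul_of_pos_right _ hn)]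
  exact run_segment_mul_ne_none hper hw (A + L)

lemma isPosCycle_segment_of_mem_dyckPerA {n : ℕ} {ω : ℤ → DyckSym M} (hω : ω ∈ dyckPerA M n) :
    IsPosCycle (segment ω 0 n) := by
  obtain ⟨⟨hshift, hfix⟩, hH⟩ := hω
  have hper := iterate_dyckShiftMap_eq_self_iff.mp hfix
  have hn : 0 < n := Nat.pos_of_ne_zero (by rintro rfl; simp [dyckH] at hH)
  have hsub (k : ℕ) (hk : 0 < k) : run (segment ω 0 (k + 1)) ≠ none := by
    have := hshift 0 k (by exact_mod_cast hk)
    rwa [Ne, dyckRed_eq_map_run, Option.map_eq_none_iff, dyckSubword_eq_segment,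
      show (k - 0 + 1 : ℤ).toNat = k + 1 by omega] at this
  set w := segment ω 0 n
  obtain ⟨⟨rb, ra⟩, hrun⟩ := Option.ne_none_iff_exists'.mp <|
    run_ne_none_of_infix (by simpa using segment_infix ω 0 0 n 1) (hsub n hn)
  have hcount := length_add_of_foldl_step hrun
  rw [dyckH_eq] at hH
  simp only [List.length_nil, length_segment] at hcount
  have hlt : rb.length < ra.length := by omega
  have hww : w ++ w = segment ω 0 (n + n) := by
    have := segment_add_mul hper 1 0 n
    rw [zero_add, one_mul] at this
    rw [segment_add, zero_add, this]
  have hrun2 := run_append_eq hrun hrun hlt.le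
  refine ⟨rb, ra, hrun, hlt, ?_⟩
  by_contra hpre
  rw [if_neg hpre, hww] at hrun2
  exact run_ne_none_of_infix (by simpa using segment_infix ω 0 0 (n + n) 1)
    (hsub (n + n) (by omega)) hrun2

-- `d` only matters for the empty word.
def periodicExt (d : Fin M) (w : List (DyckSym M)) : ℤ → DyckSym M :=
  fun i => w.getD (i % w.length).toNat (Sum.inl d)

lemma periodic_periodicExt (d : Fin M) (w : List (DyckSym M)) :
    Function.Periodic (periodicExt d w) w.length := fun i => by
  simp [periodicExt]

lemma periodicExt_natCast (d : Fin M) {w : List (DyckSym M)} {i : ℕ} (hi : i < w.length) :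
    periodicExt d w i = w[i] := by
  have hmod : (i : ℤ) % w.length = i := Int.emod_eq_of_lt (by omega) (by omega)
  simp [periodicExt, hmod, hi]

lemma segment_periodicExt (d : Fin M) (w : List (DyckSym M)) :
    segment (periodicExt d w) 0 w.length = w :=
  List.ext_getElem (by simp) fun i h _ => by
    simp only [length_segment] at h
    simp [segment, periodicExt_natCast d h]

lemma periodicExt_segment (d : Fin M) {ω : ℤ → DyckSym M} {n : ℕ}
    (hper : Function.Periodic ω n) (hn : 0 < n) : periodicExt d (segment ω 0 n) = ω := by
  funext i
  have hmod : ((i % n).toNat : ℤ) = i % n := Int.toNat_of_nonneg (Int.emod_nonneg i (by omega))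
  have hlt : (i % n).toNat < n := by
    have := Int.emod_lt_of_pos i (by exact_mod_cast hn : (0 : ℤ) < n)
    omega
  rw [periodicExt, length_segment, List.getD_eq_getElem _ _ (by simpa using hlt)]
  simp only [segment, List.getElem_map, List.getElem_range, zero_add, hmod]
  rw [Int.emod_def, mul_comm]
  exact hper.sub_int_mul_eq _

lemma periodicExt_mem_dyckPerA (d : Fin M) {w : List (DyckSym M)} (hw : IsPosCycle w) :
    periodicExt d w ∈ dyckPerA M w.length := by
  have hper := periodic_periodicExt d w
  have hseg := segment_periodicExt d w
  refine ⟨⟨mem_dyckShiftSet_of_isPosCycle hper (by rwa [hseg]),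
    iterate_dyckShiftMap_eq_self_iff.mpr hper⟩, ?_⟩
  obtain ⟨rb, ra, hrun, hlt, -⟩ := hw
  have hcount := length_add_of_foldl_step hrun
  simp only [List.length_nil] at hcount
  rw [dyckH_eq, hseg]
  omega

lemma dyckPerA_eq_image (d : Fin M) (n : ℕ) :
    dyckPerA M n = periodicExt d '' {w | w.length = n ∧ IsPosCycle w} := by
  ext ω
  constructor
  · intro hω
    have hper := iterate_dyckShiftMap_eq_self_iff.mp hω.1.2
    have hw := isPosCycle_segment_of_mem_dyckPerA hω
    have hn : 0 < n := by simpa using List.length_pos_iff.mpr hw.ne_nil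
    exact ⟨segment ω 0 n, ⟨length_segment ω 0 n, hw⟩, periodicExt_segment d hper hn⟩
  · rintro ⟨w, ⟨rfl, hw⟩, rfl⟩
    exact periodicExt_mem_dyckPerA d hw

lemma injOn_periodicExt (d : Fin M) (n : ℕ) :
    Set.InjOn (periodicExt d) {w : List (DyckSym M) | w.length = n} := by
  rintro w hw w' hw' h
  rw [← segment_periodicExt d w, ← segment_periodicExt d w', h, hw, hw']

lemma image_map_getLeft? (d : Fin M) (n : ℕ) :
    List.map Sum.getLeft? '' {w : List (DyckSym M) | w.length = n ∧ IsPosCycle w} =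
      {F | F.length = n ∧ n < 2 * F.countP (·.isSome)} := by
  ext F
  constructor
  · rintro ⟨w, ⟨rfl, rb, ra, hrun, hlt, -⟩, rfl⟩
    have hcount := length_add_of_foldl_step hrun
    rw [countP_isLeft_eq_countP_isSome] at hcount
    simp only [List.length_nil] at hcount
    exact ⟨List.length_map _, by omega⟩
  · rintro ⟨rfl, hF⟩
    refine ⟨canonicalWord d F, ⟨?_, isPosCycle_canonicalWord d hF⟩, map_getLeft?_build ..⟩
    rw [← List.length_map (f := Sum.getLeft?), canonicalWord, map_getLeft?_build]

lemma injOn_map_getLeft? :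
    Set.InjOn (List.map Sum.getLeft?) {w : List (DyckSym M) | IsPosCycle w} := by
  rintro w hw w' hw' h
  obtain ⟨x, -⟩ := List.exists_mem_of_ne_nil w hw.ne_nil
  let d : Fin M := Sum.elim id id x
  rw [hw.eq_canonicalWord d, hw'.eq_canonicalWord d, h]

end Dyck

open Dyck Finset in
theorem stmt1 (M : ℕ) (hM : 2 ≤ M) (n : ℕ) :
    ((dyckPerA M n).ncard : ℤ) =
      ((M : ℤ) + 1) ^ n - ∑ i ∈ Finset.range (n / 2 + 1), (n.choose i : ℤ) * (M : ℤ) ^ i := by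
  let d : Fin M := ⟨0, by omega⟩
  have hcard : (dyckPerA M n).ncard =
      ∑ m ∈ range (n + 1), n.choose m * (if n < 2 * m then M ^ m else 0) := by
    rw [dyckPerA_eq_image d, ((injOn_periodicExt d n).mono fun _ hw => hw.1).ncard_image,
      ← (injOn_map_getLeft?.mono fun _ hw => hw.2).ncard_image, image_map_getLeft? d n,
      ncard_length_eq_countP_isSome n (n < 2 * ·)]
    exact (card_filter_card_isSome (n < 2 * ·)).trans (by simp)
  rw [hcard, eq_sub_iff_add_eq]
  exact_mod_cast sum_choose_mul_pow_gt_half_add n M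
end
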